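/- Let R be the Laurent polynomial ring over ℂ in the variables Y_{j,n} (j ∈ {1,2}, n ∈ ℤ). Take incidence numbers I_{12} = 1, I_{21} = 3 (type G₂), and set A_{1,n} = Y_{1,n+1} Y_{1,n−1} Y_{2,n}^{−3}, A_{2,n} = Y_{2,n+1} Y_{2,n−1} Y_{1,n}^{−1}. Let S_1^−, S_2^− be the associated screening derivations on R. Then the element F₂ = Y_{2,0} + Y_{2,2}^{−1} Y_{1,1} + Y_{1,3}^{−1} Y_{2,2}² + 2 Y_{2,2} Y_{2,4}^{−1} + Y_{2,4}^{−2} Y_{1,3} + Y_{2,4} Y_{1,5}^{−1} + Y_{2,6}^{−1} lies in Ker S_1^− ∩ Ker S_2^−, and the unique dominant monomial (a monomial involving no negative powers of the variables) occurring in F₂ is Y_{2,0}. -/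

import Mathlib

/-- Exponent lattice of the Laurent polynomial ring in the variables `Y_{j,n}`,
`j ∈ {1,2}`, `n ∈ ℤ` (index `0` stands for the node `1`, index `1` for the node `2`). -/
abbrev LExp2 : Type := (Fin 2 × ℤ) →₀ ℤ

/-- The Laurent polynomial ring over `ℂ` in the variables `Y_{j,n}`. -/
abbrev LRing2 : Type := AddMonoidAlgebra ℂ LExp2

/-- The (invertible) monomial with exponent vector `v`. -/
noncomputable def Ym (v : LExp2) : LRing2 := AddMonoidAlgebra.single v 1

/-- The exponent vector of `Y_{j,n}^k`. -/
noncomputable def E (j : Fin 2) (n k : ℤ) : LExp2 := Finsupp.single (j, n) k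

/-- Exponent of `A_{1,n} = Y_{1,n+1} Y_{1,n−1} Y_{2,n}^{−3}` (type `G₂`: `I₁₂ = 1`, `I₂₁ = 3`). -/
noncomputable def A1G2 (n : ℤ) : LExp2 := E 0 (n + 1) 1 + E 0 (n - 1) 1 + E 1 n (-3)

/-- Exponent of `A_{2,n} = Y_{2,n+1} Y_{2,n−1} Y_{1,n}^{−1}`. -/
noncomputable def A2G2 (n : ℤ) : LExp2 := E 1 (n + 1) 1 + E 1 (n - 1) 1 + E 0 n (-1)

/-- Relations submodule `e_{n+1} − A_n e_{n−1}` for a family of monomial exponents. -/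
noncomputable def scrRel (Av : ℤ → LExp2) : Submodule LRing2 (ℤ →₀ LRing2) :=
  Submodule.span LRing2
    {x | ∃ n : ℤ, x =
      Finsupp.single (n + 1) (1 : LRing2) - Ym (Av n) • Finsupp.single (n - 1) (1 : LRing2)}

/-- Target module of the screening operator. -/
noncomputable abbrev ScrMod (Av : ℤ → LExp2) : Type := (ℤ →₀ LRing2) ⧸ scrRel Av

/-- The class `ē_n` in the quotient module. -/
noncomputable def ebar (Av : ℤ → LExp2) (n : ℤ) : ScrMod Av :=
  Submodule.Quotient.mk (Finsupp.single n (1 : LRing2))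

/-- `F₂ = Y_{2,0} + Y_{2,2}^{−1} Y_{1,1} + Y_{1,3}^{−1} Y_{2,2}² + 2 Y_{2,2} Y_{2,4}^{−1}
+ Y_{2,4}^{−2} Y_{1,3} + Y_{2,4} Y_{1,5}^{−1} + Y_{2,6}^{−1}`. -/
noncomputable def F2G2 : LRing2 :=
  Ym (E 1 0 1)
    + Ym (E 1 2 (-1) + E 0 1 1)
    + Ym (E 0 3 (-1) + E 1 2 2)
    + 2 * Ym (E 1 2 1 + E 1 4 (-1))
    + Ym (E 1 4 (-2) + E 0 3 1)
    + Ym (E 1 4 1 + E 0 5 (-1))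
    + Ym (E 1 6 (-1))

/-!
For each screening operator `S = S_i⁻` write `S (Y^v) = Y^v • ∂v` (`Screening.logDeriv`); the Leibniz rule makes `∂` additive
in the exponent `v`, with `∂ Y_{j,n} = δ_{ij} ē_n`. If `∂m = r ē_{n-1}` and `∂A_{i,n} = ē_{n+1} + ē_{n-1}`,
then the `sl₂`-string `∑_k C(r,k) m A_{i,n}^{-k}` lies in `Ker S`: the relation `ē_{n+1} = A_{i,n} ē_{n-1}`
turns the image into a telescoping sum, by `C(r,k+1) (k+1) = C(r,k) (r-k)`. For `i = 1`, `F₂` is a sum of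
two such strings of weight `1` and monomials without `Y_1`; for `i = 2`, it is the sum of strings of
weights `1, 2, 1` starting at `Y_{2,0}`, `Y_{1,3}^{-1} Y_{2,2}^2`, `Y_{2,4} Y_{1,5}^{-1}`. Every monomial of
`F₂` other than `Y_{2,0}` has a negative exponent.
-/

lemma Ym_add (v w : LExp2) : Ym (v + w) = Ym v * Ym w := by
  simp [Ym, AddMonoidAlgebra.single_mul_single]

lemma Ym_zero : Ym 0 = 1 := rfl

lemma Ym_smul_Ym_smul {M : Type*} [AddCommGroup M] [Module LRing2 M] (v w : LExp2) (x : M) :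
    Ym v • Ym w • x = Ym (v + w) • x := by
  rw [smul_smul, Ym_add]

lemma ebar_add_one (Av : ℤ → LExp2) (n : ℤ) :
    ebar Av (n + 1) = Ym (Av n) • ebar Av (n - 1) := by
  rw [ebar, ebar, ← Submodule.Quotient.mk_smul, Submodule.Quotient.eq]
  exact Submodule.subset_span ⟨n, rfl⟩

noncomputable def sl2String (r : ℕ) (m A : LExp2) : LRing2 :=
  ∑ k ∈ Finset.range (r + 1), r.choose k • Ym (m - k • A)

lemma sl2String_one (m A : LExp2) : sl2String 1 m A = Ym m + Ym (m - A) := by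
  simp [sl2String, Finset.sum_range_succ]

lemma sl2String_two (m A : LExp2) :
    sl2String 2 m A = Ym m + 2 • Ym (m - A) + Ym (m - 2 • A) := by
  simp [sl2String, Finset.sum_range_succ]

namespace Screening

variable {Av : ℤ → LExp2} (S : LRing2 →ₗ[ℂ] ScrMod Av)

noncomputable def logDeriv (v : LExp2) : ScrMod Av := Ym (-v) • S (Ym v)

lemma map_Ym (v : LExp2) : S (Ym v) = Ym v • logDeriv S v := by
  rw [logDeriv, Ym_smul_Ym_smul, add_neg_cancel, Ym_zero, one_smul]

variable (hS : ∀ x y : LRing2, S (x * y) = x • S y + y • S x)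
include hS

lemma logDeriv_add (v w : LExp2) : logDeriv S (v + w) = logDeriv S v + logDeriv S w := by
  have hvw : -(v + w) + v + w = 0 := by abel
  have hwv : -(v + w) + w + v = 0 := by abel
  rw [logDeriv, Ym_add, hS, map_Ym S v, map_Ym S w, smul_add, Ym_smul_Ym_smul, Ym_smul_Ym_smul,
    Ym_smul_Ym_smul, Ym_smul_Ym_smul, hvw, hwv, Ym_zero, one_smul, one_smul, add_comm]

lemma logDeriv_sub (v w : LExp2) : logDeriv S (v - w) = logDeriv S v - logDeriv S w :=
  (AddMonoidHom.mk' (logDeriv S) (logDeriv_add S hS)).map_sub v w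

lemma logDeriv_nsmul (k : ℕ) (v : LExp2) : logDeriv S (k • v) = k • logDeriv S v :=
  (AddMonoidHom.mk' (logDeriv S) (logDeriv_add S hS)).map_nsmul k v

lemma logDeriv_zsmul (k : ℤ) (v : LExp2) : logDeriv S (k • v) = k • logDeriv S v :=
  (AddMonoidHom.mk' (logDeriv S) (logDeriv_add S hS)).map_zsmul k v

lemma logDeriv_E {i : Fin 2}
    (hval : ∀ j n, S (Ym (E j n 1)) = if j = i then Ym (E i n 1) • ebar Av n else 0)
    (j : Fin 2) (n k : ℤ) : logDeriv S (E j n k) = if j = i then k • ebar Av n else 0 := by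
  have hE : E j n k = k • E j n 1 := by simp [E, Finsupp.smul_single]
  rw [hE, logDeriv_zsmul S hS, logDeriv, hval]
  split_ifs with hj
  · subst hj
    rw [Ym_smul_Ym_smul, neg_add_cancel, Ym_zero, one_smul]
  · rw [smul_zero, smul_zero]

theorem map_sl2String {r : ℕ} {n : ℤ} {m : LExp2}
    (hm : logDeriv S m = (r : ℤ) • ebar Av (n - 1))
    (hA : logDeriv S (Av n) = ebar Av (n + 1) + ebar Av (n - 1)) :
    S (sl2String r m (Av n)) = 0 := by
  set x : ℕ → ScrMod Av := fun k => Ym (m - k • Av n) • ebar Av (n - 1)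
  set y : ℕ → ScrMod Av := fun k => Ym (m - k • Av n) • ebar Av (n + 1)
  have hshift (k : ℕ) : y (k + 1) = x k := by
    simp only [x, y, ebar_add_one, Ym_smul_Ym_smul, succ_nsmul, sub_add_eq_sub_sub, sub_add_cancel]
  have hterm (k : ℕ) : S (Ym (m - k • Av n)) = ((r : ℤ) - k) • x k - (k : ℤ) • y k := by
    rw [map_Ym, logDeriv_sub S hS, logDeriv_nsmul S hS, hm, hA]
    simp only [x, y]
    module
  have hcoeff {k : ℕ} (hk : k ≤ r) :
      (r.choose (k + 1) * (k + 1 : ℕ) : ℤ) = r.choose k * ((r : ℤ) - k) := by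
    rw [← Nat.cast_sub hk]
    exact_mod_cast Nat.choose_succ_right_eq r k
  simp only [sl2String, map_sum, map_nsmul, hterm, smul_sub, Finset.sum_sub_distrib]
  rw [sub_eq_zero, Finset.sum_range_succ, Finset.sum_range_succ' _ r]
  simp only [sub_self, Nat.cast_zero, zero_smul, smul_zero, add_zero, hshift]
  refine Finset.sum_congr rfl fun k hk => ?_
  rw [← natCast_zsmul, ← natCast_zsmul, smul_smul, smul_smul,
    ← hcoeff (Finset.mem_range.mp hk).le]

lemma logDeriv_A1G2
    (hval : ∀ j n, S (Ym (E j n 1)) = if j = 0 then Ym (E 0 n 1) • ebar Av n else 0)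
    (n : ℤ) : logDeriv S (A1G2 n) = ebar Av (n + 1) + ebar Av (n - 1) := by
  simp [A1G2, logDeriv_add S hS, logDeriv_E S hS hval]

lemma logDeriv_A2G2
    (hval : ∀ j n, S (Ym (E j n 1)) = if j = 1 then Ym (E 1 n 1) • ebar Av n else 0)
    (n : ℤ) : logDeriv S (A2G2 n) = ebar Av (n + 1) + ebar Av (n - 1) := by
  simp [A2G2, logDeriv_add S hS, logDeriv_E S hS hval]

end Screening

lemma F2G2_eq_S1_strings :
    F2G2 = Ym (E 1 0 1) + sl2String 1 (E 1 2 (-1) + E 0 1 1) (A1G2 2)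
      + 2 • Ym (E 1 2 1 + E 1 4 (-1)) + sl2String 1 (E 1 4 (-2) + E 0 3 1) (A1G2 4)
      + Ym (E 1 6 (-1)) := by
  have h₂ : E 1 2 (-1) + E 0 1 1 - A1G2 2 = E 0 3 (-1) + E 1 2 2 := by
    ext ⟨j, n⟩; simp [A1G2, E, Finsupp.single_apply]; grind
  have h₄ : E 1 4 (-2) + E 0 3 1 - A1G2 4 = E 1 4 1 + E 0 5 (-1) := by
    ext ⟨j, n⟩; simp [A1G2, E, Finsupp.single_apply]; grind
  rw [sl2String_one, sl2String_one, h₂, h₄, F2G2, two_nsmul, two_mul]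
  abel

lemma F2G2_eq_S2_strings :
    F2G2 = sl2String 1 (E 1 0 1) (A2G2 1) + sl2String 2 (E 0 3 (-1) + E 1 2 2) (A2G2 3)
      + sl2String 1 (E 1 4 1 + E 0 5 (-1)) (A2G2 5) := by
  have h₁ : E 1 0 1 - A2G2 1 = E 1 2 (-1) + E 0 1 1 := by
    ext ⟨j, n⟩; simp [A2G2, E, Finsupp.single_apply]; grind
  have h₃ : E 0 3 (-1) + E 1 2 2 - A2G2 3 = E 1 2 1 + E 1 4 (-1) := by
    ext ⟨j, n⟩; simp [A2G2, E, Finsupp.single_apply]; grind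
  have h₃' : E 0 3 (-1) + E 1 2 2 - 2 • A2G2 3 = E 1 4 (-2) + E 0 3 1 := by
    ext ⟨j, n⟩; simp [A2G2, E, Finsupp.single_apply]; grind
  have h₅ : E 1 4 1 + E 0 5 (-1) - A2G2 5 = E 1 6 (-1) := by
    ext ⟨j, n⟩; simp [A2G2, E, Finsupp.single_apply]
  rw [sl2String_one, sl2String_one, sl2String_two, h₁, h₃, h₃', h₅, F2G2, two_nsmul, two_mul]
  abel

theorem AddMonoidAlgebra.mem_support_single_add_and_iff {R M : Type*} [Semiring R]
    {P : M → Prop} {v : M} {c : R} (hc : c ≠ 0) (hv : P v) {g : AddMonoidAlgebra R M}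
    (hg : ∀ w, P w → g.coeff w = 0) (w : M) :
    (w ∈ (AddMonoidAlgebra.single v c + g).coeff.support ∧ P w) ↔ w = v := by
  classical
  constructor
  · rintro ⟨hw, hPw⟩
    by_contra hwv
    simp [AddMonoidAlgebra.coeff_add, AddMonoidAlgebra.coeff_single, hg w hPw, Ne.symm hwv] at hw
  · rintro rfl
    simp [AddMonoidAlgebra.coeff_add, AddMonoidAlgebra.coeff_single, hg w hv, hc, hv]

lemma not_nonneg_of_apply_neg {v : LExp2} (p : Fin 2 × ℤ) (hp : v p < 0) : ¬∀ q, 0 ≤ v q :=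
  fun hv => (hv p).not_gt hp

lemma F2G2_eq_single_add :
    F2G2 = AddMonoidAlgebra.single (E 1 0 1) 1
      + (Ym (E 1 2 (-1) + E 0 1 1) + Ym (E 0 3 (-1) + E 1 2 2) + 2 * Ym (E 1 2 1 + E 1 4 (-1))
        + Ym (E 1 4 (-2) + E 0 3 1) + Ym (E 1 4 1 + E 0 5 (-1)) + Ym (E 1 6 (-1))) := by
  rw [F2G2, Ym]
  abel

lemma F2G2_dominant_iff (v : LExp2) :
    (v ∈ F2G2.coeff.support ∧ ∀ p, 0 ≤ v p) ↔ v = E 1 0 1 := by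
  rw [F2G2_eq_single_add]
  refine AddMonoidAlgebra.mem_support_single_add_and_iff (P := fun u : LExp2 => ∀ p, 0 ≤ u p)
    one_ne_zero ?_ ?_ v
  · intro p
    simp only [E, Finsupp.single_apply]
    split_ifs <;> norm_num
  · intro w hw
    have ne (u : LExp2) (p : Fin 2 × ℤ) (hp : u p < 0) : u ≠ w :=
      fun h => not_nonneg_of_apply_neg p hp (h ▸ hw)
    simp [Ym, two_mul, ← AddMonoidAlgebra.single_add, AddMonoidAlgebra.coeff_add,
      AddMonoidAlgebra.coeff_single,
      ne (E 1 2 (-1) + E 0 1 1) (1, 2) (by simp [E]),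
      ne (E 0 3 (-1) + E 1 2 2) (0, 3) (by simp [E]),
      ne (E 1 2 1 + E 1 4 (-1)) (1, 4) (by simp [E]),
      ne (E 1 4 (-2) + E 0 3 1) (1, 4) (by simp [E]),
      ne (E 1 4 1 + E 0 5 (-1)) (0, 5) (by simp [E]),
      ne (E 1 6 (-1)) (1, 6) (by simp [E])]

/-- For type `G₂`, the element `F₂` lies in `Ker S₁⁻ ∩ Ker S₂⁻`, and the
unique dominant monomial occurring in `F₂` is `Y_{2,0}`. -/
theorem stmt6
    (S1 : LRing2 →ₗ[ℂ] ScrMod A1G2) (S2 : LRing2 →ₗ[ℂ] ScrMod A2G2)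
    (hLeib1 : ∀ x y : LRing2, S1 (x * y) = x • S1 y + y • S1 x)
    (hLeib2 : ∀ x y : LRing2, S2 (x * y) = x • S2 y + y • S2 x)
    (hval1 : ∀ (j : Fin 2) (n : ℤ),
      S1 (Ym (E j n 1)) = if j = 0 then Ym (E 0 n 1) • ebar A1G2 n else 0)
    (hval2 : ∀ (j : Fin 2) (n : ℤ),
      S2 (Ym (E j n 1)) = if j = 1 then Ym (E 1 n 1) • ebar A2G2 n else 0) :
    (S1 F2G2 = 0 ∧ S2 F2G2 = 0) ∧
    (∀ v : LExp2, (v ∈ F2G2.coeff.support ∧ ∀ p, 0 ≤ v p) ↔ v = E 1 0 1) := by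
  have hA1 := Screening.logDeriv_A1G2 S1 hLeib1 hval1
  have hA2 := Screening.logDeriv_A2G2 S2 hLeib2 hval2
  refine ⟨⟨?_, ?_⟩, F2G2_dominant_iff⟩
  · rw [F2G2_eq_S1_strings, map_add, map_add, map_add, map_add, map_nsmul,
      Screening.map_sl2String S1 hLeib1 (n := 2) ?_ (hA1 2),
      Screening.map_sl2String S1 hLeib1 (n := 4) ?_ (hA1 4)]
    all_goals simp [Screening.map_Ym, Screening.logDeriv_add S1 hLeib1,
      Screening.logDeriv_E S1 hLeib1 hval1]
  · rw [F2G2_eq_S2_strings, map_add, map_add,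
      Screening.map_sl2String S2 hLeib2 (n := 1) ?_ (hA2 1),
      Screening.map_sl2String S2 hLeib2 (n := 3) ?_ (hA2 3),
      Screening.map_sl2String S2 hLeib2 (n := 5) ?_ (hA2 5)]
    all_goals simp [Screening.logDeriv_add S2 hLeib2, Screening.logDeriv_E S2 hLeib2 hval2]
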